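/- arXiv:2406.11399 — 2 statements merged into one kernel-verified Lean document; each statement's English description precedes it below -/
import Mathlib

section
/- Let Y^t = Σᵢ αᵢ·Uᵢ^t + τ·I^t + ε_Y^t and Xⱼ^t = Σᵢ βⱼᵢ·Uᵢ^t + ε_{Xⱼ}^t, with the M×M matrix (βⱼᵢ) restricted to j = 1,…,M invertible (N ≥ M donors), all noise terms mean-zero independent of the latents and of each other, with ε_{Xⱼ}^t ≡ 0 (noiseless donors). Then there exist weights w₁,…,w_M such that E(Y^t | do(I^t = 0)) = Σⱼ wⱼ·E(Xⱼ^t) for all t, namely w = α·B^{-1} where B is the donor loading matrix; consequently the causal effect τ = E(Y^t | I^t=1) − Σⱼ wⱼ·E(Xⱼ^t). -/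
open MeasureTheory

/-- Classical linear synthetic control identification: with `M` latents, noiseless valid
donors `X_j^t = Σᵢ B_{ji}·U_i^t` with invertible loading matrix `B`, and target
`Y^t = Σᵢ αᵢ·U_i^t + τ·I^t + ε_Y^t`, the counterfactual mean `E(Y^t | do(I^t = 0)) =
Σᵢ αᵢ·E(U_i^t)` is a fixed linear combination `Σⱼ wⱼ·E(X_j^t)` with `w = α·B⁻¹`, and
consequently `τ = E(Y^t) − Σⱼ wⱼ·E(X_j^t)` at post-intervention times (`I^t = 1`). -/
theorem stmt12 {Ω : Type*} {m0 : MeasurableSpace Ω} (μ : Measure Ω) [IsProbabilityMeasure μ]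
    {M : ℕ} (U : ℕ → Ω → Fin M → ℝ) (εY : ℕ → Ω → ℝ)
    (α : Fin M → ℝ) (τ : ℝ) (B : Matrix (Fin M) (Fin M) ℝ) (hB : IsUnit B.det)
    (I : ℕ → ℝ) (X : Fin M → ℕ → Ω → ℝ) (Y : ℕ → Ω → ℝ)
    (hX : ∀ j t, X j t = fun ω => ∑ i, B j i * U t ω i)
    (hY : ∀ t, Y t = fun ω => (∑ i, α i * U t ω i) + τ * I t + εY t ω)
    (hUInt : ∀ t i, Integrable (fun ω => U t ω i) μ)
    (hεYInt : ∀ t, Integrable (εY t) μ) (hεYm : ∀ t, ∫ ω, εY t ω ∂μ = 0) :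
    ∃ w : Fin M → ℝ, w = Matrix.vecMul α B⁻¹ ∧ ∀ t,
      (∫ ω, ∑ i, α i * U t ω i ∂μ) = ∑ j, w j * ∫ ω, X j t ω ∂μ ∧
      (I t = 1 → τ = (∫ ω, Y t ω ∂μ) - ∑ j, w j * ∫ ω, X j t ω ∂μ) := by
  set w := Matrix.vecMul α B⁻¹ with hw
  refine ⟨w, rfl, fun t => ?_⟩
  have hwB : Matrix.vecMul w B = α := by
    rw [hw, Matrix.vecMul_vecMul, Matrix.nonsing_inv_mul B hB, Matrix.vecMul_one]
  -- E X j t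
  have hEX : ∀ j, (∫ ω, X j t ω ∂μ) = ∑ i, B j i * ∫ ω, U t ω i ∂μ := by
    intro j
    rw [hX j t]
    rw [integral_finset_sum _ (fun i _ => (hUInt t i).const_mul _)]
    simp [integral_const_mul]
  have key : (∫ ω, ∑ i, α i * U t ω i ∂μ) = ∑ j, w j * ∫ ω, X j t ω ∂μ := by
    rw [integral_finset_sum _ (fun i _ => (hUInt t i).const_mul _)]
    simp only [hEX, integral_const_mul, Finset.mul_sum]
    rw [Finset.sum_comm]
    refine Finset.sum_congr rfl fun i _ => ?_
    have : ∑ j, w j * (B j i * ∫ ω, U t ω i ∂μ)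
        = (Matrix.vecMul w B) i * ∫ ω, U t ω i ∂μ := by
      rw [Matrix.vecMul, dotProduct, Finset.sum_mul]
      exact Finset.sum_congr rfl fun j _ => by ring
    rw [this, hwB]
  refine ⟨key, fun hI => ?_⟩
  have hYint : (∫ ω, Y t ω ∂μ) = (∫ ω, ∑ i, α i * U t ω i ∂μ) + τ := by
    rw [hY t]
    have h1 : Integrable (fun ω => ∑ i, α i * U t ω i) μ :=
      integrable_finset_sum _ (fun i _ => (hUInt t i).const_mul _)
    have h2 : Integrable (fun ω => ∑ i, α i * U t ω i + τ * I t) μ := by exact h1.add (integrable_const (τ * I t))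
    rw [integral_add h2 (hεYInt t), integral_add h1 (integrable_const _)]
    simp [hεYm t, hI]
  rw [hYint, key]; ring
end

section
/- Let X, Z, U be square-integrable real random variables with X = U + ε_X, Z = U + ε_Z, where U, ε_X, ε_Z are jointly independent and mean-zero with Var(U) > 0 and Var(ε_Z) ≥ 0. Define the first-stage projection X̂ = (Cov(X,Z)/Var(Z))·Z. Then for Y = α·U + ε_Y with ε_Y independent of (U, ε_X, ε_Z) and mean-zero, the slope of the population regression of Y on X̂ equals α. -/
open MeasureTheory ProbabilityTheory

/-- Population covariance. -/
noncomputable def cov {Ω : Type*} [MeasurableSpace Ω] (X Y : Ω → ℝ) (μ : Measure Ω) : ℝ :=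
  (∫ ω, X ω * Y ω ∂μ) - (∫ ω, X ω ∂μ) * (∫ ω, Y ω ∂μ)

private lemma mul_int {Ω : Type*} {m0 : MeasurableSpace Ω} {μ : Measure Ω}
    {f g : Ω → ℝ} (hf : MemLp f 2 μ) (hg : MemLp g 2 μ) :
    Integrable (fun ω => f ω * g ω) μ := by
  have : MemLp (f • g) 1 μ := hg.smul hf
  simpa [Pi.smul_apply, smul_eq_mul, Pi.mul_def] using memLp_one_iff_integrable.mp this

private lemma indep_int_zero {Ω : Type*} {m0 : MeasurableSpace Ω} {μ : Measure Ω}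
    {f g : Ω → ℝ} (h : IndepFun f g μ) (hf : AEStronglyMeasurable f μ)
    (hg : AEStronglyMeasurable g μ) (hfm : ∫ ω, f ω ∂μ = 0) :
    ∫ ω, f ω * g ω ∂μ = 0 := by
  have := h.integral_fun_mul_eq_mul_integral hf hg
  simpa [hfm] using this

/-- Population two-stage least squares: regressing the target `Y = α·U + ε_Y` on the
first-stage projection `X̂ = (Cov(X,Z)/Var Z)·Z` of the noisy donor `X = U + ε_X`
onto the excluded donor `Z = U + ε_Z` recovers the slope `α`. -/
theorem stmt14 {Ω : Type*} {m0 : MeasurableSpace Ω} (μ : Measure Ω) [IsProbabilityMeasure μ]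
    (U εX εZ εY X Y Z : Ω → ℝ) (α : ℝ)
    (hX : X = fun ω => U ω + εX ω)
    (hZ : Z = fun ω => U ω + εZ ω)
    (hY : Y = fun ω => α * U ω + εY ω)
    (hIndep : iIndepFun (m := fun _ => Real.measurableSpace) ![U, εX, εZ] μ)
    (hIndepY : IndepFun εY (fun ω => (U ω, εX ω, εZ ω)) μ)
    (hU2 : MemLp U 2 μ) (hεX2 : MemLp εX 2 μ) (hεZ2 : MemLp εZ 2 μ) (hεY2 : MemLp εY 2 μ)
    (hUm : ∫ ω, U ω ∂μ = 0) (hεXm : ∫ ω, εX ω ∂μ = 0) (hεZm : ∫ ω, εZ ω ∂μ = 0)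
    (hεYm : ∫ ω, εY ω ∂μ = 0)
    (hVarU : 0 < variance U μ) (hVarεZ : 0 ≤ variance εZ μ)
    (Xhat : Ω → ℝ) (hXhat : Xhat = fun ω => (cov X Z μ / variance Z μ) * Z ω) :
    cov Y Xhat μ / variance Xhat μ = α := by
  have hU1 : Integrable U μ := hU2.integrable one_le_two
  have hεX1 : Integrable εX μ := hεX2.integrable one_le_two
  have hεZ1 : Integrable εZ μ := hεZ2.integrable one_le_two
  have hεY1 : Integrable εY μ := hεY2.integrable one_le_two
  -- pairwise independences
  have iUX : IndepFun U εX μ := by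
    simpa using hIndep.indepFun (show (0 : Fin 3) ≠ 1 by decide)
  have iUZ : IndepFun U εZ μ := by
    simpa using hIndep.indepFun (show (0 : Fin 3) ≠ 2 by decide)
  have iXZ : IndepFun εX εZ μ := by
    simpa using hIndep.indepFun (show (1 : Fin 3) ≠ 2 by decide)
  have iYU : IndepFun εY U μ := by
    have := hIndepY.comp measurable_id measurable_fst
    simpa [Function.comp_def] using this
  have iYZ : IndepFun εY εZ μ := by
    have := hIndepY.comp measurable_id (measurable_snd.comp measurable_snd)
    simpa [Function.comp_def] using this
  -- zero cross moments
  have eUX : ∫ ω, U ω * εX ω ∂μ = 0 :=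
    indep_int_zero iUX hU2.aestronglyMeasurable hεX2.aestronglyMeasurable hUm
  have eUZ : ∫ ω, U ω * εZ ω ∂μ = 0 :=
    indep_int_zero iUZ hU2.aestronglyMeasurable hεZ2.aestronglyMeasurable hUm
  have eXZ : ∫ ω, εX ω * εZ ω ∂μ = 0 :=
    indep_int_zero iXZ hεX2.aestronglyMeasurable hεZ2.aestronglyMeasurable hεXm
  have eYU : ∫ ω, εY ω * U ω ∂μ = 0 :=
    indep_int_zero iYU hεY2.aestronglyMeasurable hU2.aestronglyMeasurable hεYm
  have eYZ : ∫ ω, εY ω * εZ ω ∂μ = 0 :=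
    indep_int_zero iYZ hεY2.aestronglyMeasurable hεZ2.aestronglyMeasurable hεYm
  -- second moment of U
  have hE2 : ∫ ω, U ω * U ω ∂μ = variance U μ := by
    rw [variance_eq_sub hU2, hUm]
    simp [sq]
  -- means
  have hXm : ∫ ω, X ω ∂μ = 0 := by
    rw [hX, integral_add hU1 hεX1, hUm, hεXm]; ring
  have hZm : ∫ ω, Z ω ∂μ = 0 := by
    rw [hZ, integral_add hU1 hεZ1, hUm, hεZm]; ring
  have hYm : ∫ ω, Y ω ∂μ = 0 := by
    rw [hY, integral_add (hU1.const_mul α) hεY1, integral_const_mul, hUm, hεYm]; ring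
  -- cov X Z = Var U
  have hcovXZ : cov X Z μ = variance U μ := by
    rw [cov, hXm, hZm]
    have hfun : (fun ω => X ω * Z ω)
        = fun ω => U ω * U ω + (U ω * εZ ω + (εX ω * U ω + εX ω * εZ ω)) := by
      rw [hX, hZ]; funext ω; ring
    have i1 : Integrable (fun ω => εX ω * U ω + εX ω * εZ ω) μ :=
      (mul_int hεX2 hU2).add (mul_int hεX2 hεZ2)
    have i2 : Integrable (fun ω => U ω * εZ ω + (εX ω * U ω + εX ω * εZ ω)) μ :=
      (mul_int hU2 hεZ2).add i1
    rw [hfun, integral_add (mul_int hU2 hU2) i2,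
      integral_add (mul_int hU2 hεZ2) i1,
      integral_add (mul_int hεX2 hU2) (mul_int hεX2 hεZ2)]
    have eXU : ∫ ω, εX ω * U ω ∂μ = 0 := by
      simpa [mul_comm] using eUX
    rw [hE2, eUZ, eXU, eXZ]; ring
  -- cov Y Z = α Var U
  have hcovYZ : cov Y Z μ = α * variance U μ := by
    rw [cov, hYm, hZm]
    have hfun : (fun ω => Y ω * Z ω)
        = fun ω => α * (U ω * U ω) + (α * (U ω * εZ ω) + (εY ω * U ω + εY ω * εZ ω)) := by
      rw [hY, hZ]; funext ω; ring
    have j1 : Integrable (fun ω => εY ω * U ω + εY ω * εZ ω) μ :=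
      (mul_int hεY2 hU2).add (mul_int hεY2 hεZ2)
    have j2 : Integrable (fun ω => α * (U ω * εZ ω) + (εY ω * U ω + εY ω * εZ ω)) μ :=
      ((mul_int hU2 hεZ2).const_mul α).add j1
    rw [hfun, integral_add ((mul_int hU2 hU2).const_mul α) j2,
      integral_add ((mul_int hU2 hεZ2).const_mul α) j1,
      integral_add (mul_int hεY2 hU2) (mul_int hεY2 hεZ2),
      integral_const_mul, integral_const_mul]
    rw [hE2, eUZ, eYU, eYZ]; ring
  -- Var Z = Var U + Var εZ
  have hVarZ : variance Z μ = variance U μ + variance εZ μ := by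
    rw [hZ]
    have : (fun ω => U ω + εZ ω) = U + εZ := rfl
    rw [this, IndepFun.variance_add hU2 hεZ2 iUZ]
  have hVarZpos : 0 < variance Z μ := by rw [hVarZ]; linarith
  set c : ℝ := cov X Z μ / variance Z μ with hc
  -- cov Y Xhat = c * cov Y Z
  have h1 : cov Y Xhat μ = c * cov Y Z μ := by
    rw [cov, cov, hXhat]
    have e1 : ∫ ω, Y ω * (c * Z ω) ∂μ = c * ∫ ω, Y ω * Z ω ∂μ := by
      rw [← integral_const_mul]
      congr 1; funext ω; ring
    have e2 : ∫ ω, c * Z ω ∂μ = c * ∫ ω, Z ω ∂μ := integral_const_mul c Z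
    rw [e1, e2]; ring
  -- Var Xhat = c² Var Z
  have h2 : variance Xhat μ = c ^ 2 * variance Z μ := by
    rw [hXhat]; exact variance_const_mul c Z μ
  rw [h1, h2, hcovYZ, hc, hcovXZ]
  have hVU : variance U μ ≠ 0 := ne_of_gt hVarU
  have hVZ : variance Z μ ≠ 0 := ne_of_gt hVarZpos
  field_simp
end
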